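/- arXiv:1804.00801 — 4 statements merged into one kernel-verified Lean document; each statement's English description precedes it below -/
import Mathlib

section
/- (Lemma 4.3(ii).) Let p* ∈ C* with ‖p*‖ ≤ μ. Let u^k ∈ U, p^k ∈ C* with ‖p^k‖ ≤ μ, q^k = Π(p^k + γΘ(u^k)). Let u⁺ ∈ U be arbitrary and p⁺ = 𝒫_μ(Π(p^k + γΘ(u⁺))), and let 0 < ε⁺ ≤ ε^k ≤ ε⁰. Then (ε^k/N)[L_γ(u^k, p*) − L_γ(u^k, p^k)] ≤ (1/(2γN))[ε^k‖p* − p^k‖² − ε⁺‖p* − p⁺‖²] + (ε^k/(γN))‖q^k − p^k‖² + (ε⁰γτ²/N)‖u^k − u⁺‖² + (ε^kτ/N)‖p* − p^k‖·‖u^k − u⁺‖. -/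
open RealInnerProductSpace

set_option maxHeartbeats 1000000 in
/-- Lemma 4.3(ii). -/
theorem spdc_augmented_dual_inequality {n m : ℕ}
    (U : Set (EuclideanSpace ℝ (Fin n)))
    (hU_ne : U.Nonempty) (hU_closed : IsClosed U) (hU_convex : Convex ℝ U)
    (C : Set (EuclideanSpace ℝ (Fin m)))
    (hC_ne : C.Nonempty) (hC_closed : IsClosed C) (hC_convex : Convex ℝ C)
    (hC_cone : ∀ a b : ℝ, 0 ≤ a → 0 ≤ b → ∀ x ∈ C, ∀ y ∈ C, a • x + b • y ∈ C)
    (Cstar : Set (EuclideanSpace ℝ (Fin m)))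
    (hCstar : Cstar = {p : EuclideanSpace ℝ (Fin m) | ∀ x ∈ C, 0 ≤ ⟪p, x⟫})
    (proj : EuclideanSpace ℝ (Fin m) → EuclideanSpace ℝ (Fin m))
    (hproj_mem : ∀ x, proj x ∈ Cstar)
    (hproj_char : ∀ x, ∀ q ∈ Cstar, ⟪q - proj x, x - proj x⟫ ≤ 0)
    (G : EuclideanSpace ℝ (Fin n) → ℝ)
    (G' : EuclideanSpace ℝ (Fin n) → EuclideanSpace ℝ (Fin n))
    (hG_grad : ∀ x, HasGradientAt G (G' x) x)
    (hG_convex : ConvexOn ℝ Set.univ G)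
    (J : EuclideanSpace ℝ (Fin n) → ℝ)
    (hJ_convex : ConvexOn ℝ Set.univ J) (hJ_lsc : LowerSemicontinuous J)
    (Θ : EuclideanSpace ℝ (Fin n) → EuclideanSpace ℝ (Fin m))
    (hΘ_Cconvex : ∀ u v : EuclideanSpace ℝ (Fin n), ∀ α : ℝ, α ∈ Set.Icc (0:ℝ) 1 →
      -(Θ (α • u + (1 - α) • v) - α • Θ u - (1 - α) • Θ v) ∈ C)
    (τ : ℝ) (O : Set (EuclideanSpace ℝ (Fin n))) (hO : IsOpen O) (hUO : U ⊆ O)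
    (hΘ_lip : ∀ u ∈ O, ∀ v ∈ O, ‖Θ u - Θ v‖ ≤ τ * ‖u - v‖)
    (γ : ℝ) (hγ : 0 < γ) (N : ℕ) (hN : 1 ≤ N) (μ : ℝ) (hμ : 0 < μ)
    (Lγ : EuclideanSpace ℝ (Fin n) → EuclideanSpace ℝ (Fin m) → ℝ)
    (hLγ : ∀ u p, Lγ u p =
      G u + J u + (‖proj (p + γ • Θ u)‖ ^ 2 - ‖p‖ ^ 2) / (2 * γ))
    (pstar : EuclideanSpace ℝ (Fin m)) (hpstar : pstar ∈ Cstar) (hpstarμ : ‖pstar‖ ≤ μ)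
    (uk : EuclideanSpace ℝ (Fin n)) (huk : uk ∈ U)
    (pk : EuclideanSpace ℝ (Fin m)) (hpk : pk ∈ Cstar) (hpkμ : ‖pk‖ ≤ μ)
    (qk : EuclideanSpace ℝ (Fin m)) (hqk : qk = proj (pk + γ • Θ uk))
    (uplus : EuclideanSpace ℝ (Fin n)) (huplus : uplus ∈ U)
    (pplus : EuclideanSpace ℝ (Fin m))
    (hpplus : pplus = min 1 (μ / ‖proj (pk + γ • Θ uplus)‖) • proj (pk + γ • Θ uplus))
    (εk εplus ε0 : ℝ) (hεplus : 0 < εplus) (hεle : εplus ≤ εk) (hεk0 : εk ≤ ε0) :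
    εk / N * (Lγ uk pstar - Lγ uk pk) ≤
      1 / (2 * γ * N) * (εk * ‖pstar - pk‖ ^ 2 - εplus * ‖pstar - pplus‖ ^ 2)
        + εk / (γ * N) * ‖qk - pk‖ ^ 2
        + ε0 * γ * τ ^ 2 / N * ‖uk - uplus‖ ^ 2
        + εk * τ / N * (‖pstar - pk‖ * ‖uk - uplus‖) := by
  have hNpos : (0:ℝ) < N := by exact_mod_cast Nat.lt_of_lt_of_le Nat.zero_lt_one hN
  have hNne : (N:ℝ) ≠ 0 := ne_of_gt hNpos
  have hγne : γ ≠ 0 := ne_of_gt hγ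
  have hεk : (0:ℝ) < εk := lt_of_lt_of_le hεplus hεle
  have hε0 : (0:ℝ) < ε0 := lt_of_lt_of_le hεk hεk0
  -- basic cone facts
  have h0C : (0 : EuclideanSpace ℝ (Fin m)) ∈ Cstar := by
    rw [hCstar]; intro x hx; simp
  have h2C : ∀ y, (2:ℝ) • proj y ∈ Cstar := by
    intro y
    have hy := hproj_mem y
    rw [hCstar] at hy ⊢
    intro x hx
    rw [real_inner_smul_left]
    have := hy x hx
    linarith
  have horth : ∀ y, ⟪proj y, y - proj y⟫ = 0 := by
    intro y
    have h1 := hproj_char y 0 h0C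
    have h2 := hproj_char y ((2:ℝ) • proj y) (h2C y)
    rw [zero_sub, inner_neg_left] at h1
    have h3 : (2:ℝ) • proj y - proj y = proj y := by
      rw [two_smul]; abel
    rw [h3] at h2
    linarith
  -- nonexpansiveness of proj
  have hne : ∀ x y, ‖proj x - proj y‖ ≤ ‖x - y‖ := by
    intro x y
    have h1 := hproj_char x (proj y) (hproj_mem y)
    have h2 := hproj_char y (proj x) (hproj_mem x)
    have key : ‖proj x - proj y‖^2 ≤ ⟪proj x - proj y, x - y⟫ := by
      have e1 : ⟪proj x - proj y, x - y⟫
          = ‖proj x - proj y‖^2 + ⟪proj x - proj y, (x - proj x) - (y - proj y)⟫ := by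
        rw [← real_inner_self_eq_norm_sq, ← inner_add_right]
        congr 1
        abel
      have h1' : 0 ≤ ⟪proj x - proj y, x - proj x⟫ := by
        have e2 : proj y - proj x = -(proj x - proj y) := by abel
        rw [e2, inner_neg_left] at h1
        linarith
      rw [e1, inner_sub_right]
      linarith
    nlinarith [real_inner_le_norm (proj x - proj y) (x - y),
      norm_nonneg (proj x - proj y), norm_nonneg (x - y)]
  -- Lemma A : key projection inequality
  have hA : ‖proj (pstar + γ • Θ uk)‖^2 ≤ ‖pstar + qk - pk‖^2 := by
    set b := pstar + γ • Θ uk with hb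
    set a := pk + γ • Θ uk with ha
    have hv : ⟪proj b, a - proj a⟫ ≤ 0 := by
      have h1 := hproj_char a (proj b) (hproj_mem b)
      have h2 := horth a
      rw [inner_sub_left] at h1
      linarith
    have horb := horth b
    have heq : pstar + qk - pk = proj b + (b - proj b - (a - proj a)) := by
      rw [hqk]; rw [hb, ha]; abel
    rw [heq, norm_add_sq_real, inner_sub_right]
    nlinarith [sq_nonneg ‖b - proj b - (a - proj a)‖, horb, hv]
  -- Lipschitz bound
  have hlip := hΘ_lip uk (hUO huk) uplus (hUO huplus)
  have htd : 0 ≤ τ * ‖uk - uplus‖ := le_trans (norm_nonneg _) hlip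
  -- bound on ‖qk - qp‖
  have hqq : ‖qk - proj (pk + γ • Θ uplus)‖ ≤ γ * (τ * ‖uk - uplus‖) := by
    have h := hne (pk + γ • Θ uk) (pk + γ • Θ uplus)
    have e : (pk + γ • Θ uk) - (pk + γ • Θ uplus) = γ • (Θ uk - Θ uplus) := by
      rw [smul_sub]; abel
    rw [e, norm_smul, Real.norm_eq_abs, abs_of_pos hγ] at h
    calc ‖qk - proj (pk + γ • Θ uplus)‖
        = ‖proj (pk + γ • Θ uk) - proj (pk + γ • Θ uplus)‖ := by rw [hqk]
      _ ≤ γ * ‖Θ uk - Θ uplus‖ := h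
      _ ≤ γ * (τ * ‖uk - uplus‖) := mul_le_mul_of_nonneg_left hlip hγ.le
  -- ball projection nonexpansiveness at pstar
  have hball : ‖pstar - pplus‖ ≤ ‖pstar - proj (pk + γ • Θ uplus)‖ := by
    by_cases hq : proj (pk + γ • Θ uplus) = 0
    · rw [hpplus, hq]; simp
    · by_cases hle : ‖proj (pk + γ • Θ uplus)‖ ≤ μ
      · have h1 : (1:ℝ) ≤ μ / ‖proj (pk + γ • Θ uplus)‖ :=
          (one_le_div (norm_pos_iff.mpr hq)).mpr hle
        rw [hpplus, min_eq_left h1, one_smul]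
      · push_neg at hle
        have hq0 : 0 < ‖proj (pk + γ • Θ uplus)‖ := lt_trans hμ hle
        have hc0 : 0 < μ / ‖proj (pk + γ • Θ uplus)‖ := div_pos hμ hq0
        have hc1 : μ / ‖proj (pk + γ • Θ uplus)‖ ≤ 1 := by
          rw [div_le_one hq0]; exact hle.le
        have hcq : μ / ‖proj (pk + γ • Θ uplus)‖ * ‖proj (pk + γ • Θ uplus)‖ = μ :=
          div_mul_cancel₀ μ (ne_of_gt hq0)
        have hPQ : ⟪pstar, proj (pk + γ • Θ uplus)⟫
            ≤ μ / ‖proj (pk + γ • Θ uplus)‖ * ‖proj (pk + γ • Θ uplus)‖^2 := by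
          have h1 := real_inner_le_norm pstar (proj (pk + γ • Θ uplus))
          have h2 : ‖pstar‖ * ‖proj (pk + γ • Θ uplus)‖ ≤ μ * ‖proj (pk + γ • Θ uplus)‖ :=
            mul_le_mul_of_nonneg_right hpstarμ (norm_nonneg _)
          have h3 : μ * ‖proj (pk + γ • Θ uplus)‖
              = μ / ‖proj (pk + γ • Θ uplus)‖ * ‖proj (pk + γ • Θ uplus)‖^2 := by
            field_simp
          linarith
        have hsq : ‖pstar - (μ / ‖proj (pk + γ • Θ uplus)‖) • proj (pk + γ • Θ uplus)‖^2
            ≤ ‖pstar - proj (pk + γ • Θ uplus)‖^2 := by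
          rw [norm_sub_sq_real, norm_sub_sq_real, real_inner_smul_right, norm_smul,
            Real.norm_eq_abs, abs_of_pos hc0]
          nlinarith [hPQ, sub_nonneg.mpr hc1,
            mul_nonneg (sq_nonneg (1 - μ / ‖proj (pk + γ • Θ uplus)‖))
              (sq_nonneg ‖proj (pk + γ • Θ uplus)‖)]
        rw [hpplus, min_eq_right hc1]
        nlinarith [hsq, norm_nonneg (pstar - (μ / ‖proj (pk + γ • Θ uplus)‖) • proj (pk + γ • Θ uplus)),
          norm_nonneg (pstar - proj (pk + γ • Θ uplus))]
  -- distance chains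
  have hSRt : ‖pstar - pplus‖ ≤ ‖pstar - qk‖ + γ * (τ * ‖uk - uplus‖) := by
    have h1 : pstar - proj (pk + γ • Θ uplus)
        = (pstar - qk) + (qk - proj (pk + γ • Θ uplus)) := by abel
    have h2 : ‖pstar - proj (pk + γ • Θ uplus)‖
        ≤ ‖pstar - qk‖ + ‖qk - proj (pk + γ • Θ uplus)‖ := by
      rw [h1]; exact norm_add_le _ _
    linarith [hball]
  have hRPQ : ‖pstar - qk‖ ≤ ‖pstar - pk‖ + ‖qk - pk‖ := by
    have h1 : pstar - qk = (pstar - pk) - (qk - pk) := by abel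
    rw [h1]; exact norm_sub_le _ _
  -- algebraic identity
  have hkey : ‖pstar + qk - pk‖^2 - ‖pstar‖^2 - ‖qk‖^2 + ‖pk‖^2
      = ‖pstar - pk‖^2 + ‖qk - pk‖^2 - ‖pstar - qk‖^2 := by
    have e : pstar + qk - pk = (pstar - pk) + qk := by abel
    rw [e]
    simp only [norm_add_sq_real, norm_sub_sq_real, inner_sub_left]
    have c1 := real_inner_comm pstar qk
    have c2 := real_inner_comm qk pk
    linarith
  have hApoly : ‖proj (pstar + γ • Θ uk)‖^2 - ‖pstar‖^2 - ‖qk‖^2 + ‖pk‖^2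
      ≤ ‖pstar - pk‖^2 + ‖qk - pk‖^2 - ‖pstar - qk‖^2 := by linarith
  -- scalar estimates
  have hS2 : εplus * ‖pstar - pplus‖^2
      ≤ εplus * (‖pstar - qk‖ + γ * (τ * ‖uk - uplus‖))^2 := by
    have h1 : ‖pstar - pplus‖^2 ≤ (‖pstar - qk‖ + γ * (τ * ‖uk - uplus‖))^2 :=
      pow_le_pow_left₀ (norm_nonneg _) hSRt 2
    exact mul_le_mul_of_nonneg_left h1 hεplus.le
  have ht0 : 0 ≤ γ * (τ * ‖uk - uplus‖) := mul_nonneg hγ.le htd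
  have hstep : εplus * (‖pstar - qk‖ + γ * (τ * ‖uk - uplus‖))^2
      ≤ εk * ‖pstar - qk‖^2 + εk * ‖qk - pk‖^2
        + 2 * ε0 * (γ * (τ * ‖uk - uplus‖))^2
        + 2 * εk * (γ * (τ * ‖uk - uplus‖)) * ‖pstar - pk‖ := by
    nlinarith [mul_nonneg (sub_nonneg.mpr hεle) (sq_nonneg ‖pstar - qk‖),
      mul_nonneg (mul_nonneg (sub_nonneg.mpr hεle) (norm_nonneg (pstar - qk))) ht0,
      mul_nonneg (mul_nonneg hεk.le ht0)
        (sub_nonneg.mpr hRPQ),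
      mul_nonneg hεk.le (sq_nonneg (‖qk - pk‖ - γ * (τ * ‖uk - uplus‖))),
      mul_nonneg (sub_nonneg.mpr hεk0) (sq_nonneg (γ * (τ * ‖uk - uplus‖))),
      mul_nonneg (sub_nonneg.mpr (le_trans hεle hεk0)) (sq_nonneg (γ * (τ * ‖uk - uplus‖)))]
  have final_poly : εk * (‖proj (pstar + γ • Θ uk)‖^2 - ‖pstar‖^2 - ‖qk‖^2 + ‖pk‖^2)
      ≤ εk * ‖pstar - pk‖^2 - εplus * ‖pstar - pplus‖^2 + 2 * εk * ‖qk - pk‖^2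
        + 2 * ε0 * γ^2 * τ^2 * ‖uk - uplus‖^2
        + 2 * γ * εk * τ * (‖pstar - pk‖ * ‖uk - uplus‖) := by
    have h1 : εk * (‖proj (pstar + γ • Θ uk)‖^2 - ‖pstar‖^2 - ‖qk‖^2 + ‖pk‖^2)
        ≤ εk * (‖pstar - pk‖^2 + ‖qk - pk‖^2 - ‖pstar - qk‖^2) :=
      mul_le_mul_of_nonneg_left hApoly hεk.le
    nlinarith [h1, hS2, hstep]
  -- conclude
  have h2γN : (0:ℝ) < 2 * γ * N := by positivity
  calc εk / N * (Lγ uk pstar - Lγ uk pk)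
      = εk * (‖proj (pstar + γ • Θ uk)‖^2 - ‖pstar‖^2 - ‖qk‖^2 + ‖pk‖^2)
          / (2 * γ * N) := by
        rw [hLγ, hLγ, ← hqk]
        field_simp
        ring
    _ ≤ (εk * ‖pstar - pk‖^2 - εplus * ‖pstar - pplus‖^2 + 2 * εk * ‖qk - pk‖^2
          + 2 * ε0 * γ^2 * τ^2 * ‖uk - uplus‖^2
          + 2 * γ * εk * τ * (‖pstar - pk‖ * ‖uk - uplus‖)) / (2 * γ * N) := by
        exact (div_le_div_iff_of_pos_right h2γN).mpr final_poly
    _ = 1 / (2 * γ * N) * (εk * ‖pstar - pk‖ ^ 2 - εplus * ‖pstar - pplus‖ ^ 2)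
        + εk / (γ * N) * ‖qk - pk‖ ^ 2
        + ε0 * γ * τ ^ 2 / N * ‖uk - uplus‖ ^ 2
        + εk * τ / N * (‖pstar - pk‖ * ‖uk - uplus‖) := by
        field_simp
end

section
/- (Lemma 5.2(i): feasibility bound via the augmented Lagrangian gap.) Let (u*, p*) be a saddle point of L on U × C*. For u ∈ U and p ∈ ℝ^m let ξ(u,p) ∈ −C denote the unique minimizer over ξ ∈ −C of (G+J)(u) + ⟨p, Θ(u) − ξ⟩ + (γ/2)‖Θ(u) − ξ‖², and let L_γ(u,p) denote the corresponding minimum value. Then for every u ∈ U: ‖Θ(u) − ξ(u, p*)‖² ≤ (2/γ)[L_γ(u, p*) − L_γ(u*, p*)]. -/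
open RealInnerProductSpace

/-- Lemma 5.2(i): for a saddle point `(u*, p*)` of `L` on `U × C*`, and
`ξ(u,p) = argmin_{ξ ∈ −C} (G+J)(u) + ⟨p, Θ(u) − ξ⟩ + (γ/2)‖Θ(u) − ξ‖²` with minimum
value `L_γ(u,p)`, for every `u ∈ U` one has
`‖Θ(u) − ξ(u, p*)‖² ≤ (2/γ)[L_γ(u, p*) − L_γ(u*, p*)]`. -/
theorem feasibility_bound_via_gap {n m : ℕ}
    (U : Set (EuclideanSpace ℝ (Fin n)))
    (hU_ne : U.Nonempty) (hU_closed : IsClosed U) (hU_convex : Convex ℝ U)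
    (C : Set (EuclideanSpace ℝ (Fin m)))
    (hC_ne : C.Nonempty) (hC_closed : IsClosed C) (hC_convex : Convex ℝ C)
    (hC_cone : ∀ a b : ℝ, 0 ≤ a → 0 ≤ b → ∀ x ∈ C, ∀ y ∈ C, a • x + b • y ∈ C)
    (Cstar : Set (EuclideanSpace ℝ (Fin m)))
    (hCstar : Cstar = {p : EuclideanSpace ℝ (Fin m) | ∀ x ∈ C, 0 ≤ ⟪p, x⟫})
    (G : EuclideanSpace ℝ (Fin n) → ℝ)
    (G' : EuclideanSpace ℝ (Fin n) → EuclideanSpace ℝ (Fin n))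
    (hG_grad : ∀ x, HasGradientAt G (G' x) x)
    (hG_convex : ConvexOn ℝ Set.univ G)
    (BG : ℝ) (hBG : ∀ x y, ‖G' x - G' y‖ ≤ BG * ‖x - y‖)
    (J : EuclideanSpace ℝ (Fin n) → ℝ)
    (hJ_convex : ConvexOn ℝ Set.univ J) (hJ_lsc : LowerSemicontinuous J)
    (hcoercive : ∀ u : ℕ → EuclideanSpace ℝ (Fin n), (∀ k, u k ∈ U) →
      Filter.Tendsto (fun k => ‖u k‖) Filter.atTop Filter.atTop →
      Filter.Tendsto (fun k => G (u k) + J (u k)) Filter.atTop Filter.atTop)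
    (Θ : EuclideanSpace ℝ (Fin n) → EuclideanSpace ℝ (Fin m))
    (hΘ_Cconvex : ∀ u v : EuclideanSpace ℝ (Fin n), ∀ α : ℝ, α ∈ Set.Icc (0:ℝ) 1 →
      -(Θ (α • u + (1 - α) • v) - α • Θ u - (1 - α) • Θ v) ∈ C)
    (τ : ℝ) (O : Set (EuclideanSpace ℝ (Fin n))) (hO : IsOpen O) (hUO : U ⊆ O)
    (hΘ_lip : ∀ u ∈ O, ∀ v ∈ O, ‖Θ u - Θ v‖ ≤ τ * ‖u - v‖)
    (L : EuclideanSpace ℝ (Fin n) → EuclideanSpace ℝ (Fin m) → ℝ)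
    (hL : ∀ u p, L u p = G u + J u + ⟪p, Θ u⟫)
    (γ : ℝ) (hγ : 0 < γ)
    (ξ : EuclideanSpace ℝ (Fin n) → EuclideanSpace ℝ (Fin m) → EuclideanSpace ℝ (Fin m))
    (hξ_mem : ∀ u p, -(ξ u p) ∈ C)
    (hξ_min : ∀ u p, ∀ ζ : EuclideanSpace ℝ (Fin m), -ζ ∈ C →
      G u + J u + ⟪p, Θ u - ξ u p⟫ + γ / 2 * ‖Θ u - ξ u p‖ ^ 2 ≤
        G u + J u + ⟪p, Θ u - ζ⟫ + γ / 2 * ‖Θ u - ζ‖ ^ 2)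
    (Lγ : EuclideanSpace ℝ (Fin n) → EuclideanSpace ℝ (Fin m) → ℝ)
    (hLγ : ∀ u p, Lγ u p = G u + J u + ⟪p, Θ u - ξ u p⟫ + γ / 2 * ‖Θ u - ξ u p‖ ^ 2)
    (ustar : EuclideanSpace ℝ (Fin n)) (pstar : EuclideanSpace ℝ (Fin m))
    (hustar : ustar ∈ U) (hpstar : pstar ∈ Cstar)
    (hsaddle : (∀ p ∈ Cstar, L ustar p ≤ L ustar pstar) ∧
      (∀ u ∈ U, L ustar pstar ≤ L u pstar)) :
    ∀ u ∈ U, ‖Θ u - ξ u pstar‖ ^ 2 ≤ 2 / γ * (Lγ u pstar - Lγ ustar pstar) := by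
  -- C as a ConvexCone
  let K : ConvexCone ℝ (EuclideanSpace ℝ (Fin m)) :=
    { carrier := C
      smul_mem' := fun c hc x hx => by
        have := hC_cone c 0 hc.le le_rfl x hx x hx
        simpa using this
      add_mem' := fun x hx y hy => by
        have := hC_cone 1 1 zero_le_one zero_le_one x hx y hy
        simpa using this }
  -- every q ∈ Cstar satisfies ⟪q, Θ ustar⟫ ≤ 0
  have hzero_mem : (0 : EuclideanSpace ℝ (Fin m)) ∈ Cstar := by
    rw [hCstar]; intro x hx; simp
  have hq_le : ∀ q ∈ Cstar, ⟪q, Θ ustar⟫ ≤ 0 := by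
    intro q hq
    have hmem : pstar + q ∈ Cstar := by
      rw [hCstar] at hpstar hq ⊢
      intro x hx
      have := add_nonneg (hpstar x hx) (hq x hx)
      simpa [inner_add_left] using this
    have := hsaddle.1 _ hmem
    rw [hL, hL, inner_add_left] at this
    linarith
  -- ⟪pstar, Θ ustar⟫ = 0
  have hp0 : ⟪pstar, Θ ustar⟫ = 0 := by
    have h1 := hq_le pstar hpstar
    have h2 := hsaddle.1 0 hzero_mem
    rw [hL, hL, inner_zero_left] at h2
    linarith
  -- -Θ ustar ∈ C (bidual argument)
  have hΘstar : -Θ ustar ∈ C := by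
    by_contra hnot
    obtain ⟨f, s, hfx, hfs⟩ := geometric_hahn_banach_point_closed hC_convex hC_closed hnot
    obtain ⟨c0, hc0⟩ := hC_ne
    have h0C : (0 : EuclideanSpace ℝ (Fin m)) ∈ C := by
      simpa using hC_cone 0 0 le_rfl le_rfl c0 hc0 c0 hc0
    have hs : s < 0 := by simpa using hfs 0 h0C
    have hfC : ∀ c ∈ C, 0 ≤ f c := by
      intro c hc
      by_contra hneg
      push_neg at hneg
      have hmem := hC_cone (s / f c) 0 (div_nonneg_of_nonpos hs.le hneg.le) le_rfl c hc c hc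
      rw [zero_smul, add_zero] at hmem
      have := hfs _ hmem
      rw [map_smul, smul_eq_mul, div_mul_cancel₀ _ hneg.ne] at this
      linarith
    set y := (InnerProductSpace.toDual ℝ (EuclideanSpace ℝ (Fin m))).symm f
    have hy : ∀ x, ⟪y, x⟫ = f x := fun x => InnerProductSpace.toDual_symm_apply
    have hyC : y ∈ Cstar := by
      rw [hCstar]
      intro x hx
      rw [hy]
      exact hfC x hx
    have h1 := hq_le y hyC
    have h3 : f (-Θ ustar) = -⟪y, Θ ustar⟫ := by rw [map_neg, hy]
    linarith
  -- Lγ ustar pstar ≤ G ustar + J ustar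
  have hLγstar : Lγ ustar pstar ≤ G ustar + J ustar := by
    have := hξ_min ustar pstar (Θ ustar) hΘstar
    rw [hLγ]
    simpa using this
  intro u hu
  -- ⟪pstar, ξ u pstar⟫ ≤ 0
  have hpxi : ⟪pstar, ξ u pstar⟫ ≤ 0 := by
    rw [hCstar] at hpstar
    have := hpstar _ (hξ_mem u pstar)
    rw [inner_neg_right] at this
    linarith
  have hsad2 := hsaddle.2 u hu
  rw [hL, hL, hp0] at hsad2
  have key : Lγ ustar pstar + γ / 2 * ‖Θ u - ξ u pstar‖ ^ 2 ≤ Lγ u pstar := by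
    rw [hLγ u pstar, inner_sub_right]
    linarith
  rw [div_mul_eq_mul_div, le_div_iff₀ hγ]
  nlinarith [key]
end

section
/- (Lemma 5.2(ii): primal suboptimality bound via the augmented Lagrangian gap.) Let (u*, p*) be a saddle point of L on U × C* and let μ₀ ≥ ‖p*‖. Then for every u ∈ U, writing Δ(u) = L_γ(u, p*) − L_γ(u*, p*) ≥ 0, one has |(G+J)(u) − (G+J)(u*)| ≤ Δ(u) + μ₀·√((2/γ)·Δ(u)). -/
open RealInnerProductSpace

/-- Lemma 5.2(ii): for a saddle point `(u*, p*)` of `L` on `U × C*` and `μ₀ ≥ ‖p*‖`,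
writing `Δ(u) = L_γ(u, p*) − L_γ(u*, p*) ≥ 0`, for every `u ∈ U` one has
`|(G+J)(u) − (G+J)(u*)| ≤ Δ(u) + μ₀·√((2/γ)·Δ(u))`. -/
theorem primal_suboptimality_bound_via_gap {n m : ℕ}
    (U : Set (EuclideanSpace ℝ (Fin n)))
    (hU_ne : U.Nonempty) (hU_closed : IsClosed U) (hU_convex : Convex ℝ U)
    (C : Set (EuclideanSpace ℝ (Fin m)))
    (hC_ne : C.Nonempty) (hC_closed : IsClosed C) (hC_convex : Convex ℝ C)
    (hC_cone : ∀ a b : ℝ, 0 ≤ a → 0 ≤ b → ∀ x ∈ C, ∀ y ∈ C, a • x + b • y ∈ C)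
    (Cstar : Set (EuclideanSpace ℝ (Fin m)))
    (hCstar : Cstar = {p : EuclideanSpace ℝ (Fin m) | ∀ x ∈ C, 0 ≤ ⟪p, x⟫})
    (G : EuclideanSpace ℝ (Fin n) → ℝ)
    (G' : EuclideanSpace ℝ (Fin n) → EuclideanSpace ℝ (Fin n))
    (hG_grad : ∀ x, HasGradientAt G (G' x) x)
    (hG_convex : ConvexOn ℝ Set.univ G)
    (BG : ℝ) (hBG : ∀ x y, ‖G' x - G' y‖ ≤ BG * ‖x - y‖)
    (J : EuclideanSpace ℝ (Fin n) → ℝ)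
    (hJ_convex : ConvexOn ℝ Set.univ J) (hJ_lsc : LowerSemicontinuous J)
    (hcoercive : ∀ u : ℕ → EuclideanSpace ℝ (Fin n), (∀ k, u k ∈ U) →
      Filter.Tendsto (fun k => ‖u k‖) Filter.atTop Filter.atTop →
      Filter.Tendsto (fun k => G (u k) + J (u k)) Filter.atTop Filter.atTop)
    (Θ : EuclideanSpace ℝ (Fin n) → EuclideanSpace ℝ (Fin m))
    (hΘ_Cconvex : ∀ u v : EuclideanSpace ℝ (Fin n), ∀ α : ℝ, α ∈ Set.Icc (0:ℝ) 1 →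
      -(Θ (α • u + (1 - α) • v) - α • Θ u - (1 - α) • Θ v) ∈ C)
    (τ : ℝ) (O : Set (EuclideanSpace ℝ (Fin n))) (hO : IsOpen O) (hUO : U ⊆ O)
    (hΘ_lip : ∀ u ∈ O, ∀ v ∈ O, ‖Θ u - Θ v‖ ≤ τ * ‖u - v‖)
    (L : EuclideanSpace ℝ (Fin n) → EuclideanSpace ℝ (Fin m) → ℝ)
    (hL : ∀ u p, L u p = G u + J u + ⟪p, Θ u⟫)
    (γ : ℝ) (hγ : 0 < γ)
    (ξ : EuclideanSpace ℝ (Fin n) → EuclideanSpace ℝ (Fin m) → EuclideanSpace ℝ (Fin m))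
    (hξ_mem : ∀ u p, -(ξ u p) ∈ C)
    (hξ_min : ∀ u p, ∀ ζ : EuclideanSpace ℝ (Fin m), -ζ ∈ C →
      G u + J u + ⟪p, Θ u - ξ u p⟫ + γ / 2 * ‖Θ u - ξ u p‖ ^ 2 ≤
        G u + J u + ⟪p, Θ u - ζ⟫ + γ / 2 * ‖Θ u - ζ‖ ^ 2)
    (Lγ : EuclideanSpace ℝ (Fin n) → EuclideanSpace ℝ (Fin m) → ℝ)
    (hLγ : ∀ u p, Lγ u p = G u + J u + ⟪p, Θ u - ξ u p⟫ + γ / 2 * ‖Θ u - ξ u p‖ ^ 2)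
    (ustar : EuclideanSpace ℝ (Fin n)) (pstar : EuclideanSpace ℝ (Fin m))
    (hustar : ustar ∈ U) (hpstar : pstar ∈ Cstar)
    (hsaddle : (∀ p ∈ Cstar, L ustar p ≤ L ustar pstar) ∧
      (∀ u ∈ U, L ustar pstar ≤ L u pstar))
    (μ₀ : ℝ) (hμ₀ : ‖pstar‖ ≤ μ₀) :
    ∀ u ∈ U, 0 ≤ Lγ u pstar - Lγ ustar pstar ∧
      |(G u + J u) - (G ustar + J ustar)| ≤
        (Lγ u pstar - Lγ ustar pstar) +
          μ₀ * Real.sqrt (2 / γ * (Lγ u pstar - Lγ ustar pstar)) := by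
  -- basic facts about pstar
  have hp : ∀ x ∈ C, 0 ≤ ⟪pstar, x⟫ := by rw [hCstar] at hpstar; exact hpstar
  have hμ0 : (0:ℝ) ≤ μ₀ := le_trans (norm_nonneg _) hμ₀
  have h0star : (0 : EuclideanSpace ℝ (Fin m)) ∈ Cstar := by
    rw [hCstar]; intro x hx; simp
  have h2star : (2:ℝ) • pstar ∈ Cstar := by
    rw [hCstar]; intro x hx
    rw [real_inner_smul_left]
    have := hp x hx; linarith
  -- complementarity: ⟪pstar, Θ ustar⟫ = 0
  have hθ0 : ⟪pstar, Θ ustar⟫ = 0 := by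
    have h1 := hsaddle.1 0 h0star
    have h2 := hsaddle.1 ((2:ℝ) • pstar) h2star
    rw [hL, hL] at h1
    rw [hL, hL] at h2
    simp only [inner_zero_left, real_inner_smul_left] at h1 h2
    linarith
  -- feasibility: -Θ ustar ∈ C, via the bipolar theorem
  have h0C : (0 : EuclideanSpace ℝ (Fin m)) ∈ C := by
    obtain ⟨x, hx⟩ := hC_ne
    have := hC_cone 0 0 le_rfl le_rfl x hx x hx
    simpa using this
  let K : ConvexCone ℝ (EuclideanSpace ℝ (Fin m)) :=
    { carrier := C
      smul_mem' := fun c hc x hx => by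
        have := hC_cone c 0 hc.le le_rfl x hx x hx
        simpa using this
      add_mem' := fun x hx y hy => by
        have := hC_cone 1 1 zero_le_one zero_le_one x hx y hy
        simpa using this }
  have hbip : ∀ z, (∀ y, (∀ x ∈ C, 0 ≤ ⟪x, y⟫) → 0 ≤ ⟪z, y⟫) → z ∈ C := by
    intro z hz
    by_contra hzn
    let P : ProperCone ℝ (EuclideanSpace ℝ (Fin m)) :=
      { toSubmodule := K.toPointedCone h0C, isClosed' := hC_closed }
    obtain ⟨y, hy1, hy2⟩ := ProperCone.hyperplane_separation' P (x₀ := z) hzn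
    have := hz y (fun x hx => hy1 x hx); linarith
  have hfeas : -(Θ ustar) ∈ C := by
    apply hbip
    intro y hy
    have hyC : y ∈ Cstar := by
      rw [hCstar]; intro x hx; rw [real_inner_comm]; exact hy x hx
    have hs := hsaddle.1 y hyC
    rw [hL, hL] at hs
    rw [inner_neg_left, real_inner_comm]
    linarith [hθ0]
  -- Lγ ustar pstar = (G + J) ustar
  have hA_le : Lγ ustar pstar ≤ G ustar + J ustar := by
    have h := hξ_min ustar pstar (Θ ustar) hfeas
    simp only [sub_self, inner_zero_right, norm_zero] at h
    rw [hLγ]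
    have h0 : γ / 2 * (0:ℝ) ^ 2 = 0 := by ring
    rw [h0] at h
    linarith
  have hA_ge : G ustar + J ustar ≤ Lγ ustar pstar := by
    rw [hLγ]
    have h2 := hp _ (hξ_mem ustar pstar)
    rw [inner_neg_right] at h2
    have h1 : 0 ≤ ⟪pstar, Θ ustar - ξ ustar pstar⟫ := by
      rw [inner_sub_right]; linarith
    have h3 : 0 ≤ γ / 2 * ‖Θ ustar - ξ ustar pstar‖ ^ 2 := by positivity
    linarith
  have hAeq : Lγ ustar pstar = G ustar + J ustar := le_antisymm hA_le hA_ge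
  intro u hu
  set w := Θ u - ξ u pstar with hw
  have hdef : Lγ u pstar = G u + J u + ⟪pstar, w⟫ + γ / 2 * ‖w‖ ^ 2 := hLγ u pstar
  -- saddle point inequality in the primal variable
  have hsad2 := hsaddle.2 u hu
  rw [hL, hL, hθ0] at hsad2
  have hξle : ⟪pstar, ξ u pstar⟫ ≤ 0 := by
    have := hp _ (hξ_mem u pstar); rw [inner_neg_right] at this; linarith
  have hkey : G ustar + J ustar ≤ G u + J u + ⟪pstar, w⟫ := by
    have hsplit : ⟪pstar, Θ u⟫ = ⟪pstar, w⟫ + ⟪pstar, ξ u pstar⟫ := by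
      rw [hw, inner_sub_right]; ring
    rw [hsplit] at hsad2
    linarith
  set Δ := Lγ u pstar - Lγ ustar pstar with hΔ
  have hΔ_eq : Δ = (G u + J u - (G ustar + J ustar)) + ⟪pstar, w⟫ + γ / 2 * ‖w‖ ^ 2 := by
    rw [hΔ, hdef, hAeq]; ring
  have hq : 0 ≤ γ / 2 * ‖w‖ ^ 2 := by positivity
  have hΔw : γ / 2 * ‖w‖ ^ 2 ≤ Δ := by linarith
  have hΔ0 : 0 ≤ Δ := le_trans hq hΔw
  have hwle : ‖w‖ ≤ Real.sqrt (2 / γ * Δ) := by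
    rw [show ‖w‖ = Real.sqrt (‖w‖ ^ 2) by rw [Real.sqrt_sq (norm_nonneg w)]]
    apply Real.sqrt_le_sqrt
    have h1 : ‖w‖ ^ 2 = 2 / γ * (γ / 2 * ‖w‖ ^ 2) := by field_simp
    rw [h1]
    apply mul_le_mul_of_nonneg_left hΔw
    positivity
  have hsq0 : 0 ≤ Real.sqrt (2 / γ * Δ) := Real.sqrt_nonneg _
  have hiw : |⟪pstar, w⟫| ≤ μ₀ * Real.sqrt (2 / γ * Δ) :=
    calc |⟪pstar, w⟫| ≤ ‖pstar‖ * ‖w‖ := abs_real_inner_le_norm _ _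
      _ ≤ μ₀ * Real.sqrt (2 / γ * Δ) := mul_le_mul hμ₀ hwle (norm_nonneg w) hμ0
  refine ⟨hΔ0, ?_⟩
  rw [abs_le]
  have hle := le_abs_self ⟪pstar, w⟫
  have hge := neg_abs_le ⟪pstar, w⟫
  constructor
  · linarith
  · linarith
end

section
/- (Lemma 5.2(iii): constraint violation bound via the augmented Lagrangian gap.) Let (u*, p*) be a saddle point of L on U × C*, and let Π denote the Euclidean projection onto C*. Then for every u ∈ U: ‖Π(Θ(u))‖² ≤ (2/γ)[L_γ(u, p*) − L_γ(u*, p*)]; equivalently, the squared Euclidean distance from Θ(u) to −C is at most (2/γ)[L_γ(u, p*) − L_γ(u*, p*)]. -/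
open RealInnerProductSpace

/-- Lemma 5.2(iii): for a saddle point `(u*, p*)` of `L` on `U × C*` and `Π` the
Euclidean projection onto `C*`, for every `u ∈ U` one has
`‖Π(Θ(u))‖² ≤ (2/γ)[L_γ(u, p*) − L_γ(u*, p*)]`; equivalently the squared distance from
`Θ(u)` to `−C` is at most `(2/γ)[L_γ(u, p*) − L_γ(u*, p*)]`. -/
theorem constraint_violation_bound_via_gap {n m : ℕ}
    (U : Set (EuclideanSpace ℝ (Fin n)))
    (hU_ne : U.Nonempty) (hU_closed : IsClosed U) (hU_convex : Convex ℝ U)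
    (C : Set (EuclideanSpace ℝ (Fin m)))
    (hC_ne : C.Nonempty) (hC_closed : IsClosed C) (hC_convex : Convex ℝ C)
    (hC_cone : ∀ a b : ℝ, 0 ≤ a → 0 ≤ b → ∀ x ∈ C, ∀ y ∈ C, a • x + b • y ∈ C)
    (Cstar : Set (EuclideanSpace ℝ (Fin m)))
    (hCstar : Cstar = {p : EuclideanSpace ℝ (Fin m) | ∀ x ∈ C, 0 ≤ ⟪p, x⟫})
    (proj : EuclideanSpace ℝ (Fin m) → EuclideanSpace ℝ (Fin m))
    (hproj_mem : ∀ x, proj x ∈ Cstar)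
    (hproj_char : ∀ x, ∀ q ∈ Cstar, ⟪q - proj x, x - proj x⟫ ≤ 0)
    (G : EuclideanSpace ℝ (Fin n) → ℝ)
    (G' : EuclideanSpace ℝ (Fin n) → EuclideanSpace ℝ (Fin n))
    (hG_grad : ∀ x, HasGradientAt G (G' x) x)
    (hG_convex : ConvexOn ℝ Set.univ G)
    (BG : ℝ) (hBG : ∀ x y, ‖G' x - G' y‖ ≤ BG * ‖x - y‖)
    (J : EuclideanSpace ℝ (Fin n) → ℝ)
    (hJ_convex : ConvexOn ℝ Set.univ J) (hJ_lsc : LowerSemicontinuous J)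
    (hcoercive : ∀ u : ℕ → EuclideanSpace ℝ (Fin n), (∀ k, u k ∈ U) →
      Filter.Tendsto (fun k => ‖u k‖) Filter.atTop Filter.atTop →
      Filter.Tendsto (fun k => G (u k) + J (u k)) Filter.atTop Filter.atTop)
    (Θ : EuclideanSpace ℝ (Fin n) → EuclideanSpace ℝ (Fin m))
    (hΘ_Cconvex : ∀ u v : EuclideanSpace ℝ (Fin n), ∀ α : ℝ, α ∈ Set.Icc (0:ℝ) 1 →
      -(Θ (α • u + (1 - α) • v) - α • Θ u - (1 - α) • Θ v) ∈ C)
    (τ : ℝ) (O : Set (EuclideanSpace ℝ (Fin n))) (hO : IsOpen O) (hUO : U ⊆ O)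
    (hΘ_lip : ∀ u ∈ O, ∀ v ∈ O, ‖Θ u - Θ v‖ ≤ τ * ‖u - v‖)
    (L : EuclideanSpace ℝ (Fin n) → EuclideanSpace ℝ (Fin m) → ℝ)
    (hL : ∀ u p, L u p = G u + J u + ⟪p, Θ u⟫)
    (γ : ℝ) (hγ : 0 < γ)
    (ξ : EuclideanSpace ℝ (Fin n) → EuclideanSpace ℝ (Fin m) → EuclideanSpace ℝ (Fin m))
    (hξ_mem : ∀ u p, -(ξ u p) ∈ C)
    (hξ_min : ∀ u p, ∀ ζ : EuclideanSpace ℝ (Fin m), -ζ ∈ C →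
      G u + J u + ⟪p, Θ u - ξ u p⟫ + γ / 2 * ‖Θ u - ξ u p‖ ^ 2 ≤
        G u + J u + ⟪p, Θ u - ζ⟫ + γ / 2 * ‖Θ u - ζ‖ ^ 2)
    (Lγ : EuclideanSpace ℝ (Fin n) → EuclideanSpace ℝ (Fin m) → ℝ)
    (hLγ : ∀ u p, Lγ u p = G u + J u + ⟪p, Θ u - ξ u p⟫ + γ / 2 * ‖Θ u - ξ u p‖ ^ 2)
    (ustar : EuclideanSpace ℝ (Fin n)) (pstar : EuclideanSpace ℝ (Fin m))
    (hustar : ustar ∈ U) (hpstar : pstar ∈ Cstar)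
    (hsaddle : (∀ p ∈ Cstar, L ustar p ≤ L ustar pstar) ∧
      (∀ u ∈ U, L ustar pstar ≤ L u pstar)) :
    ∀ u ∈ U, ‖proj (Θ u)‖ ^ 2 ≤ 2 / γ * (Lγ u pstar - Lγ ustar pstar) ∧
      (Metric.infDist (Θ u) {ζ : EuclideanSpace ℝ (Fin m) | -ζ ∈ C}) ^ 2 ≤
        2 / γ * (Lγ u pstar - Lγ ustar pstar) := by
  classical
  -- basic cone facts
  have h0C : (0 : EuclideanSpace ℝ (Fin m)) ∈ C := by
    obtain ⟨x0, hx0⟩ := hC_ne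
    simpa using hC_cone 0 0 le_rfl le_rfl x0 hx0 x0 hx0
  have hCadd : ∀ x ∈ C, ∀ y ∈ C, x + y ∈ C := by
    intro x hx y hy
    simpa using hC_cone 1 1 zero_le_one zero_le_one x hx y hy
  have hCsmul : ∀ a : ℝ, 0 ≤ a → ∀ x ∈ C, a • x ∈ C := by
    intro a ha x hx
    simpa using hC_cone a 0 ha le_rfl x hx x hx
  have h0Cstar : (0 : EuclideanSpace ℝ (Fin m)) ∈ Cstar := by
    rw [hCstar]; intro x hx; simp
  have hCstar_smul : ∀ a : ℝ, 0 ≤ a → ∀ p ∈ Cstar, a • p ∈ Cstar := by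
    rw [hCstar]; intro a ha p hp x hx
    rw [real_inner_smul_left]
    exact mul_nonneg ha (hp x hx)
  have hCstar_add : ∀ p ∈ Cstar, ∀ q ∈ Cstar, p + q ∈ Cstar := by
    rw [hCstar]; intro p hp q hq x hx
    rw [inner_add_left]
    exact add_nonneg (hp x hx) (hq x hx)
  -- complementary slackness
  have hslack : ⟪pstar, Θ ustar⟫ = 0 := by
    have h2 := hsaddle.1 ((2 : ℝ) • pstar) (hCstar_smul 2 (by norm_num) pstar hpstar)
    have hh := hsaddle.1 (((1 : ℝ)/2) • pstar)
      (hCstar_smul (1/2) (by norm_num) pstar hpstar)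
    rw [hL, hL, real_inner_smul_left] at h2
    rw [hL, hL, real_inner_smul_left] at hh
    linarith
  -- ⟪q, Θ ustar⟫ ≤ 0 for all q ∈ Cstar
  have hΘneg : ∀ q ∈ Cstar, ⟪q, Θ ustar⟫ ≤ 0 := by
    intro q hq
    have h := hsaddle.1 (pstar + q) (hCstar_add pstar hpstar q hq)
    rw [hL, hL, inner_add_left] at h
    linarith
  -- feasibility of ustar : -(Θ ustar) ∈ C, via Hilbert projection onto K = -C
  set K : Set (EuclideanSpace ℝ (Fin m)) := {ζ | -ζ ∈ C} with hK
  have hK_conv : Convex ℝ K := by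
    intro p hp q hq a b ha hb hab
    simp only [hK, Set.mem_setOf_eq] at hp hq ⊢
    have e : -(a • p + b • q) = a • (-p) + b • (-q) := by module
    rw [e]
    exact hC_cone a b ha hb _ hp _ hq
  have hK_closed : IsClosed K := hC_closed.preimage continuous_neg
  have hK_ne : K.Nonempty := ⟨0, by simpa [hK] using h0C⟩
  obtain ⟨v, hvK, hv⟩ :=
    exists_norm_eq_iInf_of_complete_convex hK_ne hK_closed.isComplete hK_conv (Θ ustar)
  have hvchar := (norm_eq_iInf_iff_real_inner_le_zero hK_conv hvK).mp hv
  have hvC : -v ∈ C := hvK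
  have hqC : Θ ustar - v ∈ Cstar := by
    rw [hCstar]; intro c hc
    have hw : v - c ∈ K := by
      simp only [hK, Set.mem_setOf_eq]
      rw [show -(v - c) = -v + c by abel]
      exact hCadd _ hvC _ hc
    have h2 := hvchar _ hw
    rw [show (v - c) - v = -c by abel, inner_neg_right] at h2
    linarith
  have hqv : ⟪Θ ustar - v, v⟫ = 0 := by
    have h1 := hvchar 0 (by simpa [hK] using h0C)
    have h2 := hvchar ((2:ℝ) • v) (by
      simp only [hK, Set.mem_setOf_eq]
      rw [show -((2:ℝ) • v) = (2:ℝ) • (-v) by module]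
      exact hCsmul 2 (by norm_num) _ hvC)
    rw [zero_sub, inner_neg_right] at h1
    rw [show (2:ℝ) • v - v = v by module] at h2
    linarith
  have hq0 : Θ ustar - v = 0 := by
    have hx := hΘneg _ hqC
    have e : ⟪Θ ustar - v, Θ ustar⟫ = ⟪Θ ustar - v, Θ ustar - v⟫ + ⟪Θ ustar - v, v⟫ := by
      rw [← inner_add_right, sub_add_cancel]
    have hnorm : ⟪Θ ustar - v, Θ ustar - v⟫ ≤ 0 := by linarith
    exact inner_self_eq_zero.mp (le_antisymm hnorm real_inner_self_nonneg)
  have hfeas : -(Θ ustar) ∈ C := by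
    have : Θ ustar = v := by rwa [sub_eq_zero] at hq0
    rw [this]; exact hvC
  -- Lγ(u*, p*) ≤ L(u*, p*)
  have hB : Lγ ustar pstar ≤ L ustar pstar := by
    have h := hξ_min ustar pstar (Θ ustar) hfeas
    rw [sub_self, inner_zero_right, norm_zero] at h
    rw [hLγ, hL, hslack]
    norm_num at h ⊢
    linarith
  -- main argument
  intro u hu
  have hξin : 0 ≤ ⟪pstar, -(ξ u pstar)⟫ := by
    have hp := hpstar; rw [hCstar] at hp
    exact hp _ (hξ_mem u pstar)
  have hA : L ustar pstar + γ/2 * ‖Θ u - ξ u pstar‖^2 ≤ Lγ u pstar := by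
    have h1 := hsaddle.2 u hu
    rw [hL ustar pstar, hL u pstar] at h1
    rw [hLγ, hL]
    have e : ⟪pstar, Θ u - ξ u pstar⟫ = ⟪pstar, Θ u⟫ + ⟪pstar, -(ξ u pstar)⟫ := by
      rw [← inner_add_right, sub_eq_add_neg]
    rw [e]
    linarith
  have hgap : γ/2 * ‖Θ u - ξ u pstar‖^2 ≤ Lγ u pstar - Lγ ustar pstar := by linarith
  -- projection facts
  have hproj_inner : ⟪proj (Θ u), Θ u⟫ = ‖proj (Θ u)‖^2 := by
    have h1 := hproj_char (Θ u) 0 h0Cstar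
    have h2 := hproj_char (Θ u) ((2:ℝ) • proj (Θ u))
      (hCstar_smul 2 (by norm_num) _ (hproj_mem _))
    rw [zero_sub, inner_neg_left] at h1
    rw [show (2:ℝ) • proj (Θ u) - proj (Θ u) = proj (Θ u) by module] at h2
    have h3 : ⟪proj (Θ u), Θ u - proj (Θ u)⟫ = 0 := le_antisymm h2 (by linarith)
    rw [inner_sub_right, real_inner_self_eq_norm_sq] at h3
    linarith [h3]
  have hbound : ‖proj (Θ u)‖ ≤ ‖Θ u - ξ u pstar‖ := by
    have hPc : ⟪proj (Θ u), ξ u pstar⟫ ≤ 0 := by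
      have hm := hproj_mem (Θ u); rw [hCstar] at hm
      have := hm _ (hξ_mem u pstar)
      rw [inner_neg_right] at this; linarith
    have hcs : ⟪proj (Θ u), Θ u - ξ u pstar⟫ ≤ ‖proj (Θ u)‖ * ‖Θ u - ξ u pstar‖ :=
      real_inner_le_norm _ _
    rw [inner_sub_right] at hcs
    nlinarith [norm_nonneg (proj (Θ u)), norm_nonneg (Θ u - ξ u pstar),
      sq_nonneg (‖proj (Θ u)‖ - ‖Θ u - ξ u pstar‖)]
  constructor
  · have h1 : ‖proj (Θ u)‖^2 ≤ ‖Θ u - ξ u pstar‖^2 :=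
      pow_le_pow_left₀ (norm_nonneg _) hbound 2
    rw [div_mul_eq_mul_div, le_div_iff₀ hγ]
    nlinarith [hgap]
  · have hd : Metric.infDist (Θ u) K ≤ ‖Θ u - ξ u pstar‖ := by
      have hmem : ξ u pstar ∈ K := hξ_mem u pstar
      have := Metric.infDist_le_dist_of_mem (x := Θ u) hmem
      rwa [dist_eq_norm] at this
    have h1 : (Metric.infDist (Θ u) K)^2 ≤ ‖Θ u - ξ u pstar‖^2 :=
      pow_le_pow_left₀ Metric.infDist_nonneg hd 2
    rw [div_mul_eq_mul_div, le_div_iff₀ hγ]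
    nlinarith [hgap]
end
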